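/- Let A be a finite boolean algebra contained as a subalgebra in boolean algebras B_1, …, B_n, with measures μ_i on B_i agreeing on A. Define the free amalgam ⊗_A B_l with atoms the formal products b_1 ⊗ ⋯ ⊗ b_n where b_i is an atom of B_i and all b_i lie below a common atom a of A, with measure μ(b_1 ⊗ ⋯ ⊗ b_n) = μ_1(b_1)⋯μ_n(b_n)/μ_1(a)^{n-1}. Then for each i, the map π_i sending b ∈ B_i with b ≤ a (a an atom of A) to a ⊗ ⋯ ⊗ a ⊗ b ⊗ a ⊗ ⋯ ⊗ a (b in the i-th position) is a measure preserving embedding of boolean algebras, and π_i ∘ ι_i = π_j ∘ ι_j on A where ι_i is the inclusion of A into B_i. -/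

import Mathlib

/-!
Each formal product lies over a unique atom of `A`, so `π i (ι i a)` is, for every `i`, the set
of products over `a`. Atoms are sup-prime, which makes `π i` a lattice homomorphism, and every
atom of `B i` occurs as an `i`-th coordinate, which makes it injective. For the measure, the
products with `i`-th coordinate an atom `c ≤ ι i a` are the free choices of atoms below `ι j a`
for `j ≠ i`, so their weights sum to `μ i c * ∏_{j ≠ i} μ j (ι j a) / μ(a) ^ (n - 1) = μ i c`;
summing over the atoms below `b` gives `μ i b`.
-/

/-- `μ` is a finitely additive probability measure on the boolean algebra `B`. -/
def IsFinAddProb {B : Type*} [BooleanAlgebra B] (μ : B → ℝ) : Prop :=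
  μ ⊥ = 0 ∧ μ ⊤ = 1 ∧ ∀ x y : B, x ⊓ y = ⊥ → μ (x ⊔ y) = μ x + μ y

/-- `e` is an embedding of boolean algebras. -/
def IsBAEmbedding {B C : Type*} [BooleanAlgebra B] [BooleanAlgebra C] (e : B → C) : Prop :=
  Function.Injective e ∧ e ⊥ = ⊥ ∧ e ⊤ = ⊤ ∧
    (∀ x y : B, e (x ⊔ y) = e x ⊔ e y) ∧ ∀ x y : B, e (x ⊓ y) = e x ⊓ e y

/-- The atoms of the free amalgam `⊗_A B_l`: formal products `b_1 ⊗ ⋯ ⊗ b_n` of atoms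
`b_i` of `B i` all lying below a common atom `a` of `A` (via the embeddings `ι i`). -/
def AmalgAtom {n : ℕ} {A : Type*} [BooleanAlgebra A] {B : Fin n → Type*}
    [∀ i, BooleanAlgebra (B i)] (ι : ∀ i, A → B i) : Type _ :=
  {t : ∀ i, B i // (∀ i, IsAtom (t i)) ∧ ∃ a : A, IsAtom a ∧ ∀ i, t i ≤ ι i a}

/-- The free amalgam itself is (identified with) the boolean algebra `Set (AmalgAtom ι)` of
sets of its atoms.  The canonical map `π i` of `B i` into the free amalgam sends `b` to the
join of all formal products whose `i`-th coordinate lies below `b`; for `b ≤ ι i a` with `a`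
an atom of `A`, this is the element `a ⊗ ⋯ ⊗ a ⊗ b ⊗ a ⊗ ⋯ ⊗ a` (`b` in the `i`-th spot). -/
def amalgEmbed {n : ℕ} {A : Type*} [BooleanAlgebra A] {B : Fin n → Type*}
    [∀ i, BooleanAlgebra (B i)] (ι : ∀ i, A → B i) (i : Fin n) (b : B i) :
    Set (AmalgAtom ι) :=
  {t : AmalgAtom ι | t.1 i ≤ b}

/-- The measure on the free amalgam determined by a weight function `w` on the atoms. -/
noncomputable def amalgMeasure {n : ℕ} {A : Type*} [BooleanAlgebra A] {B : Fin n → Type*}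
    [∀ i, BooleanAlgebra (B i)] (ι : ∀ i, A → B i) (w : AmalgAtom ι → ℝ)
    (s : Set (AmalgAtom ι)) : ℝ :=
  ∑' t : AmalgAtom ι, s.indicator w t

lemma IsAtom.supPrime {α : Type*} [DistribLattice α] [OrderBot α] {a : α} (ha : IsAtom a) :
    SupPrime a := by
  refine ⟨fun h => ha.ne_bot h.eq_bot, fun b c habc => ?_⟩
  by_contra! h
  exact ha.not_disjoint_iff_le.2 habc
    ((ha.not_le_iff_disjoint.1 h.1).sup_right (ha.not_le_iff_disjoint.1 h.2))

section AtomsBelow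

variable {B : Type*} [BooleanAlgebra B] [Fintype B]

open Classical in
noncomputable def atomsBelow (b : B) : Finset B :=
  {c | IsAtom c ∧ c ≤ b}

lemma mem_atomsBelow {b c : B} : c ∈ atomsBelow b ↔ IsAtom c ∧ c ≤ b := by
  simp [atomsBelow]

lemma sup_atomsBelow (b : B) : (atomsBelow b).sup id = b :=
  le_antisymm (Finset.sup_le fun _ hc => (mem_atomsBelow.1 hc).2)
    (BooleanAlgebra.le_iff_atom_le_imp.2 fun _ hc hcb =>
      Finset.le_sup (f := id) (mem_atomsBelow.2 ⟨hc, hcb⟩))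

lemma pairwiseDisjoint_atomsBelow (b : B) : (atomsBelow b : Set B).PairwiseDisjoint id :=
  fun _ hc _ hd hcd => (mem_atomsBelow.1 hc).1.disjoint_of_ne (mem_atomsBelow.1 hd).1 hcd

end AtomsBelow

namespace IsFinAddProb

variable {B : Type*} [BooleanAlgebra B] {μ : B → ℝ}

lemma map_finset_sup (hμ : IsFinAddProb μ) {κ : Type*} {s : Finset κ} {f : κ → B}
    (hs : (s : Set κ).PairwiseDisjoint f) : μ (s.sup f) = ∑ k ∈ s, μ (f k) := by
  classical
  induction s using Finset.induction_on with
  | empty => simpa using hμ.1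
  | insert k s hk ih =>
    rw [Finset.coe_insert, Set.pairwiseDisjoint_insert_of_notMem hk] at hs
    rw [Finset.sup_insert, Finset.sum_insert hk,
      hμ.2.2 _ _ (disjoint_iff.1 (Finset.disjoint_sup_right.2 hs.2)), ih hs.1]

lemma eq_sum_atomsBelow [Fintype B] (hμ : IsFinAddProb μ) (b : B) :
    μ b = ∑ c ∈ atomsBelow b, μ c := by
  conv_lhs => rw [← sup_atomsBelow b]
  exact hμ.map_finset_sup (pairwiseDisjoint_atomsBelow b)

end IsFinAddProb

namespace IsBAEmbedding

variable {A B : Type*} [BooleanAlgebra A] [BooleanAlgebra B] {e : A → B}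

def toBoundedLatticeHom (he : IsBAEmbedding e) : BoundedLatticeHom A B where
  toFun := e
  map_sup' := he.2.2.2.1
  map_inf' := he.2.2.2.2
  map_top' := he.2.2.1
  map_bot' := he.2.1

lemma monotone (he : IsBAEmbedding e) : Monotone e :=
  OrderHomClass.mono he.toBoundedLatticeHom

lemma map_ne_bot (he : IsBAEmbedding e) {a : A} (ha : a ≠ ⊥) : e a ≠ ⊥ :=
  fun h => ha (he.1 (h.trans he.2.1.symm))

lemma exists_isAtom_le_map [Fintype A] (he : IsBAEmbedding e) {c : B} (hc : IsAtom c) :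
    ∃ a, IsAtom a ∧ c ≤ e a := by
  have hc_top : c ≤ he.toBoundedLatticeHom ((atomsBelow ⊤).sup id) := by
    rw [sup_atomsBelow]
    exact le_top.trans he.2.2.1.ge
  rw [map_finset_sup] at hc_top
  obtain ⟨a, ha, hca⟩ := hc.supPrime.le_finset_sup.1 hc_top
  exact ⟨a, (mem_atomsBelow.1 ha).1, hca⟩

end IsBAEmbedding

namespace AmalgAtom

variable {n : ℕ} {A : Type*} [BooleanAlgebra A] {B : Fin n → Type*}
  [∀ i, BooleanAlgebra (B i)] {ι : ∀ i, A → B i}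

instance [∀ i, Finite (B i)] : Finite (AmalgAtom ι) := by
  unfold AmalgAtom
  infer_instance

lemma le_map_of_le_map (hι : ∀ i, IsBAEmbedding (ι i)) (t : AmalgAtom ι) {a : A} {i : Fin n}
    (h : t.1 i ≤ ι i a) (j : Fin n) : t.1 j ≤ ι j a := by
  obtain ⟨ht, a', ha', hle⟩ := t.2
  have ha'a : a' ≤ a := by
    by_contra hna
    have hti : t.1 i ≤ ι i (a' ⊓ a) := (hι i).2.2.2.2 a' a ▸ le_inf (hle i) h
    rw [disjoint_iff.1 (ha'.not_le_iff_disjoint.1 hna), (hι i).2.1] at hti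
    exact (ht i).ne_bot (le_bot_iff.1 hti)
  exact (hle j).trans ((hι j).monotone ha'a)

lemma exists_apply_eq [Fintype A] [∀ i, IsAtomic (B i)] (hι : ∀ i, IsBAEmbedding (ι i))
    {i : Fin n} {c : B i} (hc : IsAtom c) : ∃ t : AmalgAtom ι, t.1 i = c := by
  classical
  obtain ⟨a, ha, hca⟩ := (hι i).exists_isAtom_le_map hc
  choose d hd hda using fun j => ((eq_bot_or_exists_atom_le (ι j a)).resolve_left
    ((hι j).map_ne_bot ha.ne_bot))
  refine ⟨⟨Function.update d i c, fun j => ?_, a, ha, fun j => ?_⟩,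
    Function.update_self i c d⟩
  · rcases eq_or_ne j i with rfl | hji
    · simpa using hc
    · simpa [hji] using hd j
  · rcases eq_or_ne j i with rfl | hji
    · simpa using hca
    · simpa [hji] using hda j

end AmalgAtom

section Amalgam

variable {n : ℕ} {A : Type*} [BooleanAlgebra A] {B : Fin n → Type*}
  [∀ i, BooleanAlgebra (B i)] {ι : ∀ i, A → B i}

lemma amalgEmbed_map_eq (hι : ∀ i, IsBAEmbedding (ι i)) (i j : Fin n) (a : A) :
    amalgEmbed ι i (ι i a) = amalgEmbed ι j (ι j a) :=
  Set.ext fun t => ⟨fun h => t.le_map_of_le_map hι h j, fun h => t.le_map_of_le_map hι h i⟩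

lemma isBAEmbedding_amalgEmbed [Fintype A] [∀ i, IsAtomic (B i)]
    (hι : ∀ i, IsBAEmbedding (ι i)) (i : Fin n) : IsBAEmbedding (amalgEmbed ι i) := by
  refine ⟨fun x y hxy => ?_, ?_, ?_, fun x y => ?_, fun x y => ?_⟩
  · refine BooleanAlgebra.eq_iff_atom_le_iff.2 fun c hc => ?_
    obtain ⟨t, rfl⟩ := AmalgAtom.exists_apply_eq hι hc
    exact Set.ext_iff.1 hxy t
  · exact Set.eq_empty_of_forall_notMem fun t ht => (t.2.1 i).ne_bot (le_bot_iff.1 ht)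
  · exact Set.eq_univ_of_forall fun t => le_top
  · exact Set.ext fun t => (t.2.1 i).supPrime.le_sup
  · exact Set.ext fun t => le_inf_iff

end Amalgam

section AmalgMeasure

variable {n : ℕ} {A : Type*} [BooleanAlgebra A] {B : Fin n → Type*}
  [∀ i, BooleanAlgebra (B i)] [∀ i, Fintype (B i)] {ι : ∀ i, A → B i}

open Classical in
lemma AmalgAtom.sum_fiber_eq_sum_piFinset [Fintype (AmalgAtom ι)]
    (hι : ∀ i, IsBAEmbedding (ι i)) {a : A} (ha : IsAtom a) {i : Fin n} {c : B i}
    (hc : IsAtom c) (hca : c ≤ ι i a) (F : (∀ j, B j) → ℝ) :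
    ∑ t : AmalgAtom ι with t.1 i = c, F t.1 =
      ∑ p ∈ Fintype.piFinset (Function.update (fun j => atomsBelow (ι j a)) i {c}), F p := by
  conv_rhs => rw [Fintype.piFinset_update_singleton_eq_filter_piFinset_eq
    (fun j => atomsBelow (ι j a)) i (mem_atomsBelow.2 ⟨hc, hca⟩)]
  have mem_piFinset {p : ∀ j, B j} :
      p ∈ Fintype.piFinset (fun j => atomsBelow (ι j a)) ↔
        ∀ j, IsAtom (p j) ∧ p j ≤ ι j a := by
    simp only [Fintype.mem_piFinset, mem_atomsBelow]
  refine Finset.sum_bij' (fun t _ => t.1)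
    (fun p hp => ⟨p, fun j => (mem_piFinset.1 (Finset.mem_filter.1 hp).1 j).1, a, ha,
      fun j => (mem_piFinset.1 (Finset.mem_filter.1 hp).1 j).2⟩)
    (fun t ht => ?_) (fun p hp => ?_) (fun _ _ => rfl) (fun _ _ => rfl) (fun _ _ => rfl)
  · have hti : t.1 i = c := (Finset.mem_filter.1 ht).2
    exact Finset.mem_filter.2
      ⟨mem_piFinset.2 fun j => ⟨t.2.1 j, t.le_map_of_le_map hι (hti ▸ hca) j⟩, hti⟩
  · exact Finset.mem_filter.2 ⟨Finset.mem_univ _, (Finset.mem_filter.1 hp).2⟩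

open Classical in
lemma AmalgAtom.sum_weight_fiber [Fintype A] [Fintype (AmalgAtom ι)]
    (hι : ∀ i, IsBAEmbedding (ι i)) (μ : ∀ i, B i → ℝ) (hμ : ∀ i, IsFinAddProb (μ i))
    (hpos : ∀ i, ∀ x : B i, x ≠ ⊥ → 0 < μ i x)
    (hagree : ∀ i j : Fin n, ∀ a : A, μ i (ι i a) = μ j (ι j a))
    (i₀ : Fin n) (w : AmalgAtom ι → ℝ)
    (hw : ∀ (t : AmalgAtom ι) (a : A), IsAtom a → (∀ i, t.1 i ≤ ι i a) →
      w t = (∏ i, μ i (t.1 i)) / (μ i₀ (ι i₀ a)) ^ (n - 1))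
    {i : Fin n} {c : B i} (hc : IsAtom c) :
    ∑ t : AmalgAtom ι with t.1 i = c, w t = μ i c := by
  obtain ⟨a, ha, hca⟩ := (hι i).exists_isAtom_le_map hc
  set M := μ i₀ (ι i₀ a)
  have hM : M ≠ 0 := (hpos i₀ _ ((hι i₀).map_ne_bot ha.ne_bot)).ne'
  have hw_fiber : ∀ t ∈ ({t | t.1 i = c} : Finset (AmalgAtom ι)),
      w t = (∏ j, μ j (t.1 j)) / M ^ (n - 1) := fun t ht =>
    hw t a ha (t.le_map_of_le_map hι ((Finset.mem_filter.1 ht).2 ▸ hca))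
  have h_other : ∀ j ∈ ({i}ᶜ : Finset (Fin n)),
      ∑ d ∈ Function.update (fun j => atomsBelow (ι j a)) i {c} j, μ j d = M := fun j hj => by
    rw [Function.update_of_ne (Finset.mem_compl.1 hj ∘ Finset.mem_singleton.2),
      ← (hμ j).eq_sum_atomsBelow, hagree]
  have h_prod : ∏ j, ∑ d ∈ Function.update (fun j => atomsBelow (ι j a)) i {c} j, μ j d =
      μ i c * M ^ (n - 1) := by
    rw [Fintype.prod_eq_mul_prod_compl i, Finset.prod_congr rfl h_other, Finset.prod_const,
      Finset.card_compl, Finset.card_singleton, Fintype.card_fin, Function.update_self,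
      Finset.sum_singleton]
  rw [Finset.sum_congr rfl hw_fiber,
    AmalgAtom.sum_fiber_eq_sum_piFinset hι ha hc hca fun p => (∏ j, μ j (p j)) / M ^ (n - 1),
    ← Finset.sum_div, ← Finset.prod_univ_sum, h_prod, mul_div_cancel_right₀ _ (pow_ne_zero _ hM)]

lemma amalgMeasure_amalgEmbed [Fintype A] (hι : ∀ i, IsBAEmbedding (ι i))
    (μ : ∀ i, B i → ℝ) (hμ : ∀ i, IsFinAddProb (μ i))
    (hpos : ∀ i, ∀ x : B i, x ≠ ⊥ → 0 < μ i x)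
    (hagree : ∀ i j : Fin n, ∀ a : A, μ i (ι i a) = μ j (ι j a))
    (i₀ : Fin n) (w : AmalgAtom ι → ℝ)
    (hw : ∀ (t : AmalgAtom ι) (a : A), IsAtom a → (∀ i, t.1 i ≤ ι i a) →
      w t = (∏ i, μ i (t.1 i)) / (μ i₀ (ι i₀ a)) ^ (n - 1))
    (i : Fin n) (b : B i) : amalgMeasure ι w (amalgEmbed ι i b) = μ i b := by
  classical
  have := Fintype.ofFinite (AmalgAtom ι)
  have h_fiber (c : B i) (hc : c ∈ atomsBelow b) :
      ∑ t : AmalgAtom ι with t.1 i = c, w t = μ i c :=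
    AmalgAtom.sum_weight_fiber hι μ hμ hpos hagree i₀ w hw (mem_atomsBelow.1 hc).1
  have h_mem (t : AmalgAtom ι) : t.1 i ∈ atomsBelow b ↔ t ∈ amalgEmbed ι i b :=
    mem_atomsBelow.trans (and_iff_right (t.2.1 i))
  rw [amalgMeasure, tsum_fintype, (hμ i).eq_sum_atomsBelow, ← Finset.sum_congr rfl h_fiber,
    Finset.sum_fiberwise_eq_sum_filter _ _ (fun t : AmalgAtom ι => t.1 i), Finset.sum_filter]
  simp only [h_mem, Set.indicator_apply]

end AmalgMeasure

/-- Let `A` be a finite boolean algebra contained as a subalgebra in finite boolean algebras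
`B 1, …, B n` via embeddings `ι i`, with finitely additive probability measures `μ i` on `B i`
(positive on nonzero elements) agreeing on `A`.  Form the free amalgam `⊗_A B_l` with atoms
the formal products `b_1 ⊗ ⋯ ⊗ b_n` (`b_i` an atom of `B i`, all below a common atom `a` of
`A`), weighted by `w(b_1 ⊗ ⋯ ⊗ b_n) = μ_1(b_1)⋯μ_n(b_n)/μ_1(a)^(n-1)`.  Then each `π i` is a
measure preserving embedding of boolean algebras, and `π i ∘ ι i = π j ∘ ι j` on `A`. -/
theorem stmt6 {n : ℕ} (hn : 1 ≤ n) {A : Type*} [BooleanAlgebra A] [Fintype A]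
    {B : Fin n → Type*} [∀ i, BooleanAlgebra (B i)] [∀ i, Fintype (B i)]
    (ι : ∀ i, A → B i) (hι : ∀ i, IsBAEmbedding (ι i))
    (μ : ∀ i, B i → ℝ) (hμ : ∀ i, IsFinAddProb (μ i))
    (hpos : ∀ i, ∀ x : B i, x ≠ ⊥ → 0 < μ i x)
    (hagree : ∀ i j : Fin n, ∀ a : A, μ i (ι i a) = μ j (ι j a))
    (w : AmalgAtom ι → ℝ)
    (hw : ∀ (t : AmalgAtom ι) (a : A), IsAtom a → (∀ i, t.1 i ≤ ι i a) →
      w t = (∏ i, μ i (t.1 i)) / (μ ⟨0, hn⟩ (ι ⟨0, hn⟩ a)) ^ (n - 1)) :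
    (∀ i, IsBAEmbedding (amalgEmbed ι i)) ∧
    (∀ (i : Fin n) (b : B i), amalgMeasure ι w (amalgEmbed ι i b) = μ i b) ∧
    (∀ (i j : Fin n) (a : A), amalgEmbed ι i (ι i a) = amalgEmbed ι j (ι j a)) :=
  ⟨isBAEmbedding_amalgEmbed hι, amalgMeasure_amalgEmbed hι μ hμ hpos hagree _ w hw,
    amalgEmbed_map_eq hι⟩
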